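/- PBC(∀HyperLTL) ≤ TeamLTL(⊕): every PBC(∀HyperLTL) sentence ⋁ᵢ ⋀ⱼ ∀π.φ_{i,j}(π) (with φ_{i,j} quantifier-free, single free variable π) is equivalent to the TeamLTL(⊕) formula ⊕ᵢ ⋀ⱼ φ_{i,j}; i.e., for all teams T, ∅ ⊨_T ⋁ᵢ ⋀ⱼ ∀π.φ_{i,j}(π) iff T ⊨ ⊕ᵢ ⋀ⱼ φ_{i,j} under lax team semantics. -/
import Mathlib


/-- A trace over `AP`: an infinite sequence of sets of atomic propositions. -/
def Trace (AP : Type) := ℕ → Set AP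

/-- The suffix `t[i,∞]` of a trace. -/
def Trace.shift {AP : Type} (t : Trace AP) (i : ℕ) : Trace AP := fun n => t (n + i)

/-- `T[f,∞] = {t[s,∞] | t ∈ T, s ∈ f(t)}`. -/
def teamShift {AP : Type} (T : Set (Trace AP)) (f : Trace AP → Set ℕ) : Set (Trace AP) :=
  {s | ∃ t ∈ T, ∃ i ∈ f t, s = t.shift i}

/-- `f : T → 𝒫(ℕ)⁺`: assigns a nonempty set of time steps to every trace of the team. -/
def goodF {AP : Type} (T : Set (Trace AP)) (f : Trace AP → Set ℕ) : Prop :=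
  ∀ t ∈ T, (f t).Nonempty

/-- The ordering `f' < f` on choice functions (on the domain `T'`). -/
def fLT {AP : Type} (T' : Set (Trace AP)) (f' f : Trace AP → Set ℕ) : Prop :=
  ∀ t ∈ T', sInf (f' t) ≤ sInf (f t) ∧
    ∀ m, IsGreatest (f t) m → ∃ m', IsGreatest (f' t) m' ∧ m' < m

/-- Formulas of (NNF) LTL, extended with the Boolean disjunction `boolOr` (⊕)
and the Boolean negation `bNeg` (∼). -/
inductive TForm (AP : Type) where
  | pos : AP → TForm AP
  | neg : AP → TForm AP
  | and : TForm AP → TForm AP → TForm AP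
  | or : TForm AP → TForm AP → TForm AP
  | boolOr : TForm AP → TForm AP → TForm AP
  | bNeg : TForm AP → TForm AP
  | next : TForm AP → TForm AP
  | glob : TForm AP → TForm AP
  | untl : TForm AP → TForm AP → TForm AP

/-- Plain LTL formulas (negation normal form; no ⊕, no ∼). -/
def TForm.isLTL {AP : Type} : TForm AP → Prop
  | .pos _ => True
  | .neg _ => True
  | .and φ ψ => φ.isLTL ∧ ψ.isLTL
  | .or φ ψ => φ.isLTL ∧ ψ.isLTL
  | .boolOr _ _ => False
  | .bNeg _ => False
  | .next φ => φ.isLTL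
  | .glob φ => φ.isLTL
  | .untl φ ψ => φ.isLTL ∧ ψ.isLTL

/-- TeamLTL(⊕) formulas: no Boolean negation. -/
def TForm.noBNeg {AP : Type} : TForm AP → Prop
  | .pos _ => True
  | .neg _ => True
  | .and φ ψ => φ.noBNeg ∧ ψ.noBNeg
  | .or φ ψ => φ.noBNeg ∧ ψ.noBNeg
  | .boolOr φ ψ => φ.noBNeg ∧ ψ.noBNeg
  | .bNeg _ => False
  | .next φ => φ.noBNeg
  | .glob φ => φ.noBNeg
  | .untl φ ψ => φ.noBNeg ∧ ψ.noBNeg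

/-- Ordinary single-trace LTL satisfaction (⊕ read as ∨ and ∼ as ¬). -/
def TForm.sat {AP : Type} : Trace AP → TForm AP → Prop
  | t, .pos p => p ∈ t 0
  | t, .neg p => p ∉ t 0
  | t, .and φ ψ => TForm.sat t φ ∧ TForm.sat t ψ
  | t, .or φ ψ => TForm.sat t φ ∨ TForm.sat t ψ
  | t, .boolOr φ ψ => TForm.sat t φ ∨ TForm.sat t ψ
  | t, .bNeg φ => ¬ TForm.sat t φ
  | t, .next φ => TForm.sat (t.shift 1) φ
  | t, .glob φ => ∀ i, TForm.sat (t.shift i) φ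
  | t, .untl φ ψ => ∃ i, TForm.sat (t.shift i) ψ ∧ ∀ j < i, TForm.sat (t.shift j) φ

/-- Lax team semantics of TeamLTL(⊕,∼). -/
def TForm.teamSat {AP : Type} : Set (Trace AP) → TForm AP → Prop
  | T, .pos p => ∀ t ∈ T, p ∈ t 0
  | T, .neg p => ∀ t ∈ T, p ∉ t 0
  | T, .and φ ψ => TForm.teamSat T φ ∧ TForm.teamSat T ψ
  | T, .or φ ψ => ∃ T₁ T₂, T₁ ∪ T₂ = T ∧ TForm.teamSat T₁ φ ∧ TForm.teamSat T₂ ψ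
  | T, .boolOr φ ψ => TForm.teamSat T φ ∨ TForm.teamSat T ψ
  | T, .bNeg φ => ¬ TForm.teamSat T φ
  | T, .next φ => TForm.teamSat (teamShift T (fun _ => {1})) φ
  | T, .glob φ => ∀ f, goodF T f → TForm.teamSat (teamShift T f) φ
  | T, .untl φ ψ => ∃ f, goodF T f ∧ TForm.teamSat (teamShift T f) ψ ∧
      ∀ f', goodF {t ∈ T | ¬ IsGreatest (f t) 0} f' →
        fLT {t ∈ T | ¬ IsGreatest (f t) 0} f' f →
        ({t ∈ T | ¬ IsGreatest (f t) 0} = (∅ : Set (Trace AP)) ∨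
          TForm.teamSat (teamShift {t ∈ T | ¬ IsGreatest (f t) 0} f') φ)

/-- HyperLTL formulas (quantifiers may occur anywhere). -/
inductive HForm (AP V : Type) where
  | atom : AP → V → HForm AP V
  | hnot : HForm AP V → HForm AP V
  | hand : HForm AP V → HForm AP V → HForm AP V
  | hor : HForm AP V → HForm AP V → HForm AP V
  | hnext : HForm AP V → HForm AP V
  | hglob : HForm AP V → HForm AP V
  | huntl : HForm AP V → HForm AP V → HForm AP V
  | hall : V → HForm AP V → HForm AP V
  | hex : V → HForm AP V → HForm AP V

/-- Shift a trace assignment: `Π[i,∞]`. -/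
def shiftA {AP V : Type} (A : V → Trace AP) (i : ℕ) : V → Trace AP := fun v => (A v).shift i

/-- HyperLTL satisfaction `Π ⊨_T φ`. -/
def HForm.hsat {AP V : Type} [DecidableEq V] :
    (V → Trace AP) → Set (Trace AP) → HForm AP V → Prop
  | A, _, .atom a v => a ∈ A v 0
  | A, T, .hnot φ => ¬ HForm.hsat A T φ
  | A, T, .hand φ ψ => HForm.hsat A T φ ∧ HForm.hsat A T ψ
  | A, T, .hor φ ψ => HForm.hsat A T φ ∨ HForm.hsat A T ψ
  | A, T, .hnext φ => HForm.hsat (shiftA A 1) T φ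
  | A, T, .hglob φ => ∀ i, HForm.hsat (shiftA A i) T φ
  | A, T, .huntl φ ψ => ∃ i, HForm.hsat (shiftA A i) T ψ ∧
      ∀ j < i, HForm.hsat (shiftA A j) T φ
  | A, T, .hall v φ => ∀ t ∈ T, HForm.hsat (Function.update A v t) T φ
  | A, T, .hex v φ => ∃ t ∈ T, HForm.hsat (Function.update A v t) T φ

/-- Quantifier-free HyperLTL formulas. -/
def HForm.QFree {AP V : Type} : HForm AP V → Prop
  | .atom _ _ => True
  | .hnot φ => φ.QFree
  | .hand φ ψ => φ.QFree ∧ ψ.QFree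
  | .hor φ ψ => φ.QFree ∧ ψ.QFree
  | .hnext φ => φ.QFree
  | .hglob φ => φ.QFree
  | .huntl φ ψ => φ.QFree ∧ ψ.QFree
  | .hall _ _ => False
  | .hex _ _ => False

/-- All trace variables occurring in a HyperLTL formula. -/
def HForm.vars {AP V : Type} : HForm AP V → Set V
  | .atom _ v => {v}
  | .hnot φ => φ.vars
  | .hand φ ψ => φ.vars ∪ ψ.vars
  | .hor φ ψ => φ.vars ∪ ψ.vars
  | .hnext φ => φ.vars
  | .hglob φ => φ.vars
  | .huntl φ ψ => φ.vars ∪ ψ.vars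
  | .hall v φ => insert v φ.vars
  | .hex v φ => insert v φ.vars

/-- Free trace variables of a HyperLTL formula. -/
def HForm.free {AP V : Type} : HForm AP V → Set V
  | .atom _ v => {v}
  | .hnot φ => φ.free
  | .hand φ ψ => φ.free ∪ ψ.free
  | .hor φ ψ => φ.free ∪ ψ.free
  | .hnext φ => φ.free
  | .hglob φ => φ.free
  | .huntl φ ψ => φ.free ∪ ψ.free
  | .hall v φ => φ.free \ {v}
  | .hex v φ => φ.free \ {v}

/-- Rename the trace variables of a HyperLTL formula. -/
def HForm.rename {AP V : Type} (ρ : V → V) : HForm AP V → HForm AP V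
  | .atom a v => .atom a (ρ v)
  | .hnot φ => .hnot (φ.rename ρ)
  | .hand φ ψ => .hand (φ.rename ρ) (ψ.rename ρ)
  | .hor φ ψ => .hor (φ.rename ρ) (ψ.rename ρ)
  | .hnext φ => .hnext (φ.rename ρ)
  | .hglob φ => .hglob (φ.rename ρ)
  | .huntl φ ψ => .huntl (φ.rename ρ) (ψ.rename ρ)
  | .hall v φ => .hall (ρ v) (φ.rename ρ)
  | .hex v φ => .hex (ρ v) (φ.rename ρ)

/-- Hyperification `φ ↦ φ(π)`: replace each proposition `p` by `p_π`. -/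
def TForm.hyperify {AP V : Type} (π : V) : TForm AP → HForm AP V
  | .pos p => .atom p π
  | .neg p => .hnot (.atom p π)
  | .and φ ψ => .hand (φ.hyperify π) (ψ.hyperify π)
  | .or φ ψ => .hor (φ.hyperify π) (ψ.hyperify π)
  | .boolOr φ ψ => .hor (φ.hyperify π) (ψ.hyperify π)
  | .bNeg φ => .hnot (φ.hyperify π)
  | .next φ => .hnext (φ.hyperify π)
  | .glob φ => .hglob (φ.hyperify π)
  | .untl φ ψ => .huntl (φ.hyperify π) (ψ.hyperify π)

/-- A tautological NNF LTL formula. -/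
def TForm.verum {AP : Type} [Inhabited AP] : TForm AP := .or (.pos default) (.neg default)

/-- Negation normal form of the (classical) negation of an NNF LTL formula. -/
def TForm.dual {AP : Type} [Inhabited AP] : TForm AP → TForm AP
  | .pos p => .neg p
  | .neg p => .pos p
  | .and φ ψ => .or φ.dual ψ.dual
  | .or φ ψ => .and φ.dual ψ.dual
  | .boolOr φ ψ => .and φ.dual ψ.dual
  | .bNeg φ => φ
  | .next φ => .next φ.dual
  | .glob φ => .untl TForm.verum φ.dual
  | .untl φ ψ => .or (.glob ψ.dual) (.untl ψ.dual (.and φ.dual ψ.dual))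

/-- The shorthand `∃β := ∼β^d`. -/
def TForm.tExists {AP : Type} [Inhabited AP] (β : TForm AP) : TForm AP := .bNeg β.dual

mutual
/-- Erase trace-variable subscripts: turn a quantifier-free HyperLTL formula into
an (NNF) LTL formula, pushing classical negations inward. -/
def deH {AP V : Type} [Inhabited AP] : HForm AP V → TForm AP
  | .atom a _ => .pos a
  | .hnot φ => deHn φ
  | .hand φ ψ => .and (deH φ) (deH ψ)
  | .hor φ ψ => .or (deH φ) (deH ψ)
  | .hnext φ => .next (deH φ)
  | .hglob φ => .glob (deH φ)
  | .huntl φ ψ => .untl (deH φ) (deH ψ)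
  | .hall _ φ => deH φ
  | .hex _ φ => deH φ

/-- NNF of the negation of an erased quantifier-free HyperLTL formula. -/
def deHn {AP V : Type} [Inhabited AP] : HForm AP V → TForm AP
  | .atom a _ => .neg a
  | .hnot φ => deH φ
  | .hand φ ψ => .or (deHn φ) (deHn ψ)
  | .hor φ ψ => .and (deHn φ) (deHn ψ)
  | .hnext φ => .next (deHn φ)
  | .hglob φ => .untl TForm.verum (deHn φ)
  | .huntl φ ψ => .or (.glob (deHn ψ)) (.untl (deHn ψ) (.and (deHn φ) (deHn ψ)))
  | .hall _ φ => deHn φ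
  | .hex _ φ => deHn φ
end

/-- `φ₀ ∨ φ₁ ∨ ⋯ ∨ φₘ` for a nonempty family of HyperLTL formulas. -/
def HForm.bigOrF {AP V : Type} {m : ℕ} (f : Fin (m + 1) → HForm AP V) : HForm AP V :=
  (List.ofFn fun i : Fin m => f i.succ).foldr .hor (f 0)

/-- `φ₀ ∧ φ₁ ∧ ⋯ ∧ φₘ` for a nonempty family of HyperLTL formulas. -/
def HForm.bigAndF {AP V : Type} {m : ℕ} (f : Fin (m + 1) → HForm AP V) : HForm AP V :=
  (List.ofFn fun i : Fin m => f i.succ).foldr .hand (f 0)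

/-- `φ₀ ⊕ φ₁ ⊕ ⋯ ⊕ φₘ` for a nonempty family of team formulas. -/
def TForm.bigBoolOrF {AP : Type} {m : ℕ} (f : Fin (m + 1) → TForm AP) : TForm AP :=
  (List.ofFn fun i : Fin m => f i.succ).foldr .boolOr (f 0)

/-- `φ₀ ∧ φ₁ ∧ ⋯ ∧ φₘ` for a nonempty family of team formulas. -/
def TForm.bigAndF {AP : Type} {m : ℕ} (f : Fin (m + 1) → TForm AP) : TForm AP :=
  (List.ofFn fun i : Fin m => f i.succ).foldr .and (f 0)

/-- Apply a quantifier block (`true` = ∀, `false` = ∃). -/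
def applyBlock {AP V : Type} (qs : List (Bool × V)) (φ : HForm AP V) : HForm AP V :=
  qs.foldr (fun q acc => if q.1 then .hall q.2 acc else .hex q.2 acc) φ

/-- The dual of a quantifier block. -/
def dualBlock {V : Type} (qs : List (Bool × V)) : List (Bool × V) :=
  qs.map fun q => (!q.1, q.2)

section Aux

open Classical in
lemma until_neg_aux (a b : ℕ → Prop) :
    ((∀ i, ¬ b i) ∨ ∃ i, (¬ a i ∧ ¬ b i) ∧ ∀ j < i, ¬ b j) ↔
      ¬ ∃ i, b i ∧ ∀ j < i, a j := by
  constructor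
  · rintro (h | ⟨i, ⟨ha, hb⟩, hj⟩) ⟨k, hbk, hak⟩
    · exact h k hbk
    · rcases lt_trichotomy k i with hk | rfl | hk
      · exact hj k hk hbk
      · exact hb hbk
      · exact ha (hak i hk)
  · intro h
    by_cases hb : ∀ i, ¬ b i
    · exact Or.inl hb
    push_neg at hb
    right
    have hi₀ : b (Nat.find hb) := Nat.find_spec hb
    have hmin : ∀ k < Nat.find hb, ¬ b k := fun k hk => Nat.find_min hb hk
    have hja : ∃ j, j < Nat.find hb ∧ ¬ a j := by
      by_contra hc
      push_neg at hc
      exact h ⟨Nat.find hb, hi₀, fun j hj => hc j hj⟩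
    have hja' : ∃ j, ¬ a j := ⟨hja.choose, hja.choose_spec.2⟩
    refine ⟨Nat.find hja', ⟨Nat.find_spec hja', ?_⟩, ?_⟩
    · exact hmin _ (lt_of_le_of_lt (Nat.find_min' hja' hja.choose_spec.2) hja.choose_spec.1)
    · intro k hk
      exact hmin _ (lt_of_lt_of_le hk
        (le_of_lt (lt_of_le_of_lt (Nat.find_min' hja' hja.choose_spec.2) hja.choose_spec.1)))

lemma verum_sat {AP : Type} [Inhabited AP] (t : Trace AP) : TForm.sat t TForm.verum := by
  simp only [TForm.verum, TForm.sat]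
  exact em _

lemma mem_teamShift {AP : Type} {T : Set (Trace AP)} {f : Trace AP → Set ℕ} {s : Trace AP} :
    s ∈ teamShift T f ↔ ∃ t ∈ T, ∃ i ∈ f t, s = t.shift i := Iff.rfl

lemma isGreatest_singleton_nat {j : ℕ} : IsGreatest ({j} : Set ℕ) j :=
  ⟨rfl, fun _ h => le_of_eq (Set.mem_singleton_iff.mp h)⟩

/-- Flatness for plain LTL formulas. -/
lemma flatness {AP : Type} : ∀ (φ : TForm AP), φ.isLTL →
    ∀ T : Set (Trace AP), φ.teamSat T ↔ ∀ t ∈ T, φ.sat t := by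
  intro φ
  induction φ with
  | pos p => intro _ T; simp [TForm.teamSat, TForm.sat]
  | neg p => intro _ T; simp [TForm.teamSat, TForm.sat]
  | and φ ψ ihφ ihψ =>
    intro h T
    simp only [TForm.teamSat, TForm.sat, ihφ h.1, ihψ h.2]
    aesop
  | or φ ψ ihφ ihψ =>
    intro h T
    simp only [TForm.teamSat, TForm.sat]
    constructor
    · rintro ⟨T₁, T₂, hu, h₁, h₂⟩ t ht
      rw [← hu] at ht
      rcases ht with ht | ht
      · exact Or.inl ((ihφ h.1 T₁).mp h₁ t ht)
      · exact Or.inr ((ihψ h.2 T₂).mp h₂ t ht)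
    · intro ht
      refine ⟨{t ∈ T | φ.sat t}, {t ∈ T | ψ.sat t}, ?_, ?_, ?_⟩
      · ext t; constructor
        · rintro (h | h) <;> exact h.1
        · intro hT; rcases ht t hT with h' | h'
          · exact Or.inl ⟨hT, h'⟩
          · exact Or.inr ⟨hT, h'⟩
      · exact (ihφ h.1 _).mpr fun t h' => h'.2
      · exact (ihψ h.2 _).mpr fun t h' => h'.2
  | boolOr φ ψ ihφ ihψ => intro h; exact absurd h id
  | bNeg φ ih => intro h; exact absurd h id
  | next φ ih =>
    intro h T
    simp only [TForm.teamSat, TForm.sat, ih h]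
    constructor
    · intro h' t ht
      exact h' _ ⟨t, ht, 1, rfl, rfl⟩
    · rintro h' s ⟨t, ht, i, hi, rfl⟩
      rcases Set.mem_singleton_iff.mp hi with rfl
      exact h' t ht
  | glob φ ih =>
    intro h T
    simp only [TForm.teamSat, TForm.sat, ih h]
    constructor
    · intro h' t ht i
      exact h' (fun _ => Set.univ) (fun _ _ => ⟨0, trivial⟩) _ ⟨t, ht, i, trivial, rfl⟩
    · rintro h' f hf s ⟨t, ht, i, hi, rfl⟩
      exact h' t ht i
  | untl φ ψ ihφ ihψ =>
    intro h T
    classical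
    simp only [TForm.teamSat, TForm.sat]
    constructor
    · rintro ⟨f, hf, hψT, hφT⟩ t ht
      refine ⟨sInf (f t), (ihψ h.2 _).mp hψT _ ⟨t, ht, _, Nat.sInf_mem (hf t ht), rfl⟩, ?_⟩
      intro j hj
      have htT' : t ∈ {t ∈ T | ¬ IsGreatest (f t) 0} := by
        refine ⟨ht, fun hg => ?_⟩
        have : sInf (f t) = 0 := le_antisymm (Nat.sInf_le hg.1) (Nat.zero_le _)
        omega
      set T' := {t ∈ T | ¬ IsGreatest (f t) 0} with hT'
      set f' : Trace AP → Set ℕ := fun t' => if t' = t then {j} else {0} with hf'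
      have hgood : goodF T' f' := by
        intro t' _
        by_cases h' : t' = t <;> simp [hf', h']
      have hlt : fLT T' f' f := by
        intro t' ht'
        by_cases h' : t' = t
        · subst h'
          constructor
          · simp only [hf', if_pos rfl, csInf_singleton]; omega
          · intro m hm
            refine ⟨j, by simpa [hf'] using isGreatest_singleton_nat, ?_⟩
            have := Nat.sInf_le hm.1
            omega
        · constructor
          · simp [hf', h']
          · intro m hm
            refine ⟨0, by simpa [hf', h'] using isGreatest_singleton_nat, ?_⟩
            rcases Nat.eq_zero_or_pos m with rfl | hpos
            · exact absurd hm ht'.2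
            · exact hpos
      rcases hφT f' hgood hlt with hemp | hsat'
      · exact absurd (hemp ▸ htT') (Set.notMem_empty t)
      · have := (ihφ h.1 _).mp hsat' (t.shift j) ⟨t, htT', j, by simp [hf'], rfl⟩
        exact this
    · intro ht
      choose! g hg1 hg2 using ht
      refine ⟨fun t => {g t}, fun t _ => ⟨g t, rfl⟩, ?_, ?_⟩
      · refine (ihψ h.2 _).mpr ?_
        rintro s ⟨t, htT, i, hi, rfl⟩
        rcases Set.mem_singleton_iff.mp hi with rfl
        exact hg1 t htT
      · intro f' hgood hlt
        right
        refine (ihφ h.1 _).mpr ?_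
        rintro s ⟨t, ⟨htT, hng⟩, k, hk, rfl⟩
        obtain ⟨hle, hgr⟩ := hlt t ⟨htT, hng⟩
        obtain ⟨m', hm', hm'lt⟩ := hgr (g t) isGreatest_singleton_nat
        exact hg2 t htT k (lt_of_le_of_lt (hm'.2 hk) hm'lt)

/-- deH and deHn produce plain LTL formulas. -/
lemma deH_isLTL {AP V : Type} [Inhabited AP] :
    ∀ φ : HForm AP V, (deH φ).isLTL ∧ (deHn φ).isLTL := by
  intro φ
  induction φ with
  | atom a v => exact ⟨trivial, trivial⟩
  | hnot φ ih => exact ⟨ih.2, ih.1⟩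
  | hand φ ψ ihφ ihψ => exact ⟨⟨ihφ.1, ihψ.1⟩, ⟨ihφ.2, ihψ.2⟩⟩
  | hor φ ψ ihφ ihψ => exact ⟨⟨ihφ.1, ihψ.1⟩, ⟨ihφ.2, ihψ.2⟩⟩
  | hnext φ ih => exact ⟨ih.1, ih.2⟩
  | hglob φ ih => exact ⟨ih.1, ⟨⟨trivial, trivial⟩, ih.2⟩⟩
  | huntl φ ψ ihφ ihψ => exact ⟨⟨ihφ.1, ihψ.1⟩, ⟨ihψ.2, ihψ.2, ihφ.2, ihψ.2⟩⟩
  | hall v φ ih => exact ih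
  | hex v φ ih => exact ih

set_option maxHeartbeats 1000000 in
/-- Erasure preserves semantics on QF one-variable formulas. -/
lemma deH_sat {AP V : Type} [Inhabited AP] [DecidableEq V] (π : V) :
    ∀ φ : HForm AP V, φ.QFree → φ.free ⊆ {π} →
      ∀ (A : V → Trace AP) (T : Set (Trace AP)),
        (HForm.hsat A T φ ↔ (deH φ).sat (A π)) ∧
        ((deHn φ).sat (A π) ↔ ¬ HForm.hsat A T φ) := by
  intro φ
  induction φ with
  | atom a v =>
    intro _ hfree A T
    have hv : v = π := hfree (by simp [HForm.free])
    subst hv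
    constructor <;> simp [HForm.hsat, deH, deHn, TForm.sat]
  | hnot φ ih =>
    intro hqf hfree A T
    obtain ⟨h1, h2⟩ := ih hqf hfree A T
    constructor
    · simpa [HForm.hsat, deH] using h2.symm
    · simp only [HForm.hsat, deHn, not_not]
      exact h1.symm
  | hand φ ψ ihφ ihψ =>
    intro hqf hfree A T
    have hfφ : φ.free ⊆ {π} := fun v hv => hfree (Or.inl hv)
    have hfψ : ψ.free ⊆ {π} := fun v hv => hfree (Or.inr hv)
    obtain ⟨h1, h2⟩ := ihφ hqf.1 hfφ A T
    obtain ⟨h3, h4⟩ := ihψ hqf.2 hfψ A T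
    constructor
    · simp only [HForm.hsat, deH, TForm.sat, h1, h3]
    · simp only [HForm.hsat, deHn, TForm.sat, h2, h4]
      tauto
  | hor φ ψ ihφ ihψ =>
    intro hqf hfree A T
    have hfφ : φ.free ⊆ {π} := fun v hv => hfree (Or.inl hv)
    have hfψ : ψ.free ⊆ {π} := fun v hv => hfree (Or.inr hv)
    obtain ⟨h1, h2⟩ := ihφ hqf.1 hfφ A T
    obtain ⟨h3, h4⟩ := ihψ hqf.2 hfψ A T
    constructor
    · simp only [HForm.hsat, deH, TForm.sat, h1, h3]
    · simp only [HForm.hsat, deHn, TForm.sat, h2, h4]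
      tauto
  | hnext φ ih =>
    intro hqf hfree A T
    obtain ⟨h1, h2⟩ := ih hqf hfree (shiftA A 1) T
    constructor
    · simpa [HForm.hsat, deH, TForm.sat, shiftA] using h1
    · simpa [HForm.hsat, deHn, TForm.sat, shiftA] using h2
  | hglob φ ih =>
    intro hqf hfree A T
    have key : ∀ i, (HForm.hsat (shiftA A i) T φ ↔ (deH φ).sat ((A π).shift i)) ∧
        ((deHn φ).sat ((A π).shift i) ↔ ¬ HForm.hsat (shiftA A i) T φ) :=
      fun i => ih hqf hfree (shiftA A i) T
    constructor
    · simp only [HForm.hsat, deH, TForm.sat]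
      exact forall_congr' fun i => (key i).1
    · simp only [HForm.hsat, deHn, TForm.sat]
      constructor
      · rintro ⟨i, hi, -⟩ hall
        exact ((key i).2.mp hi) (hall i)
      · intro h
        push_neg at h
        obtain ⟨i, hi⟩ := h
        exact ⟨i, (key i).2.mpr hi, fun j _ => verum_sat _⟩
  | huntl φ ψ ihφ ihψ =>
    intro hqf hfree A T
    have hfφ : φ.free ⊆ {π} := fun v hv => hfree (Or.inl hv)
    have hfψ : ψ.free ⊆ {π} := fun v hv => hfree (Or.inr hv)
    have keyφ : ∀ i, (HForm.hsat (shiftA A i) T φ ↔ (deH φ).sat ((A π).shift i)) ∧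
        ((deHn φ).sat ((A π).shift i) ↔ ¬ HForm.hsat (shiftA A i) T φ) :=
      fun i => ihφ hqf.1 hfφ (shiftA A i) T
    have keyψ : ∀ i, (HForm.hsat (shiftA A i) T ψ ↔ (deH ψ).sat ((A π).shift i)) ∧
        ((deHn ψ).sat ((A π).shift i) ↔ ¬ HForm.hsat (shiftA A i) T ψ) :=
      fun i => ihψ hqf.2 hfψ (shiftA A i) T
    constructor
    · simp only [HForm.hsat, deH, TForm.sat]
      constructor
      · rintro ⟨i, hi, hj⟩
        exact ⟨i, (keyψ i).1.mp hi, fun j hj' => (keyφ j).1.mp (hj j hj')⟩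
      · rintro ⟨i, hi, hj⟩
        exact ⟨i, (keyψ i).1.mpr hi, fun j hj' => (keyφ j).1.mpr (hj j hj')⟩
    · simp only [HForm.hsat, deHn, TForm.sat]
      have := until_neg_aux (fun i => HForm.hsat (shiftA A i) T φ)
        (fun i => HForm.hsat (shiftA A i) T ψ)
      rw [← this]
      constructor
      · rintro (h | ⟨i, ⟨h1, h2⟩, h3⟩)
        · exact Or.inl fun i => (keyψ i).2.mp (h i)
        · exact Or.inr ⟨i, ⟨(keyφ i).2.mp h1, (keyψ i).2.mp h2⟩,
            fun j hj => (keyψ j).2.mp (h3 j hj)⟩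
      · rintro (h | ⟨i, ⟨h1, h2⟩, h3⟩)
        · exact Or.inl fun i => (keyψ i).2.mpr (h i)
        · exact Or.inr ⟨i, ⟨(keyφ i).2.mpr h1, (keyψ i).2.mpr h2⟩,
            fun j hj => (keyψ j).2.mpr (h3 j hj)⟩
  | hall v φ ih => intro hqf; exact absurd hqf id
  | hex v φ ih => intro hqf; exact absurd hqf id

/-- foldr hor semantics. -/
lemma hsat_foldr_hor {AP V : Type} [DecidableEq V] (A : V → Trace AP) (T : Set (Trace AP)) :
    ∀ (l : List (HForm AP V)) (φ₀ : HForm AP V),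
      HForm.hsat A T (l.foldr .hor φ₀) ↔ HForm.hsat A T φ₀ ∨ ∃ ψ ∈ l, HForm.hsat A T ψ := by
  intro l
  induction l with
  | nil => simp
  | cons ψ l ih =>
    intro φ₀
    simp only [List.foldr_cons, List.mem_cons]
    rw [show HForm.hsat A T (HForm.hor ψ (l.foldr .hor φ₀)) =
      (HForm.hsat A T ψ ∨ HForm.hsat A T (l.foldr .hor φ₀)) from rfl, ih]
    aesop

lemma hsat_foldr_hand {AP V : Type} [DecidableEq V] (A : V → Trace AP) (T : Set (Trace AP)) :
    ∀ (l : List (HForm AP V)) (φ₀ : HForm AP V),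
      HForm.hsat A T (l.foldr .hand φ₀) ↔ HForm.hsat A T φ₀ ∧ ∀ ψ ∈ l, HForm.hsat A T ψ := by
  intro l
  induction l with
  | nil => simp
  | cons ψ l ih =>
    intro φ₀
    simp only [List.foldr_cons, List.mem_cons]
    rw [show HForm.hsat A T (HForm.hand ψ (l.foldr .hand φ₀)) =
      (HForm.hsat A T ψ ∧ HForm.hsat A T (l.foldr .hand φ₀)) from rfl, ih]
    aesop

lemma teamSat_foldr_boolOr {AP : Type} (T : Set (Trace AP)) :
    ∀ (l : List (TForm AP)) (φ₀ : TForm AP),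
      TForm.teamSat T (l.foldr .boolOr φ₀) ↔
        TForm.teamSat T φ₀ ∨ ∃ ψ ∈ l, TForm.teamSat T ψ := by
  intro l
  induction l with
  | nil => simp
  | cons ψ l ih =>
    intro φ₀
    simp only [List.foldr_cons, List.mem_cons]
    rw [show TForm.teamSat T (TForm.boolOr ψ (l.foldr .boolOr φ₀)) =
      (TForm.teamSat T ψ ∨ TForm.teamSat T (l.foldr .boolOr φ₀)) from rfl, ih]
    aesop

lemma teamSat_foldr_and {AP : Type} (T : Set (Trace AP)) :
    ∀ (l : List (TForm AP)) (φ₀ : TForm AP),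
      TForm.teamSat T (l.foldr .and φ₀) ↔
        TForm.teamSat T φ₀ ∧ ∀ ψ ∈ l, TForm.teamSat T ψ := by
  intro l
  induction l with
  | nil => simp
  | cons ψ l ih =>
    intro φ₀
    simp only [List.foldr_cons, List.mem_cons]
    rw [show TForm.teamSat T (TForm.and ψ (l.foldr .and φ₀)) =
      (TForm.teamSat T ψ ∧ TForm.teamSat T (l.foldr .and φ₀)) from rfl, ih]
    aesop

end Aux

/-- PBC(∀HyperLTL) ≤ TeamLTL(⊕): `⋁ᵢ ⋀ⱼ ∀π.φᵢⱼ(π)` is equivalent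
to `⊕ᵢ ⋀ⱼ φᵢⱼ`, where `φᵢⱼ` erases the trace-variable subscripts. -/
theorem pbc_forall_hyperLTL_le_teamLTL_boolOr {AP V : Type} [Inhabited AP]
    [DecidableEq V] (m n : ℕ) (π : V)
    (φ : Fin (m + 1) → Fin (n + 1) → HForm AP V)
    (hqf : ∀ i j, (φ i j).QFree)
    (hfree : ∀ i j, (φ i j).free ⊆ {π})
    (T : Set (Trace AP)) (A : V → Trace AP) :
    HForm.hsat A T
        (HForm.bigOrF fun i => HForm.bigAndF fun j => .hall π (φ i j)) ↔
      TForm.teamSat T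
        (TForm.bigBoolOrF fun i => TForm.bigAndF fun j => deH (φ i j)) := by
  have hmain : ∀ (i : Fin (m+1)) (j : Fin (n+1)),
      (HForm.hsat A T (.hall π (φ i j)) ↔ ∀ t ∈ T, (deH (φ i j)).sat t) ∧
      (TForm.teamSat T (deH (φ i j)) ↔ ∀ t ∈ T, (deH (φ i j)).sat t) := by
    intro i j
    constructor
    · show (∀ t ∈ T, HForm.hsat (Function.update A π t) T (φ i j)) ↔ _
      refine forall₂_congr fun t ht => ?_
      have := (deH_sat π (φ i j) (hqf i j) (hfree i j) (Function.update A π t) T).1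
      rwa [Function.update_self] at this
    · exact flatness _ (deH_isLTL (φ i j)).1 T
  have LHS : HForm.hsat A T
      (HForm.bigOrF fun i => HForm.bigAndF fun j => HForm.hall π (φ i j)) ↔
      ∃ i, ∀ j, ∀ t ∈ T, (deH (φ i j)).sat t := by
    rw [HForm.bigOrF, hsat_foldr_hor]
    simp only [List.mem_ofFn, Set.mem_range]
    have hand : ∀ i : Fin (m+1),
        HForm.hsat A T (HForm.bigAndF fun j => HForm.hall π (φ i j)) ↔
          ∀ j, ∀ t ∈ T, (deH (φ i j)).sat t := by
      intro i
      rw [HForm.bigAndF, hsat_foldr_hand]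
      simp only [List.mem_ofFn, Set.mem_range]
      rw [Fin.forall_fin_succ]
      constructor
      · rintro ⟨h0, hs⟩
        exact ⟨(hmain i 0).1.mp h0, fun j => (hmain i j.succ).1.mp (hs _ ⟨j, rfl⟩)⟩
      · rintro ⟨h0, hs⟩
        exact ⟨(hmain i 0).1.mpr h0, by rintro ψ ⟨j, rfl⟩; exact (hmain i j.succ).1.mpr (hs j)⟩
    rw [hand 0]
    constructor
    · rintro (h | ⟨ψ, ⟨i, rfl⟩, h⟩)
      · exact ⟨0, h⟩
      · exact ⟨i.succ, (hand i.succ).mp h⟩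
    · rintro ⟨i, h⟩
      rcases Fin.eq_zero_or_eq_succ i with rfl | ⟨i', rfl⟩
      · exact Or.inl h
      · exact Or.inr ⟨_, ⟨i', rfl⟩, (hand i'.succ).mpr h⟩
  have RHS : TForm.teamSat T
      (TForm.bigBoolOrF fun i => TForm.bigAndF fun j => deH (φ i j)) ↔
      ∃ i, ∀ j, ∀ t ∈ T, (deH (φ i j)).sat t := by
    rw [TForm.bigBoolOrF, teamSat_foldr_boolOr]
    simp only [List.mem_ofFn, Set.mem_range]
    have hand : ∀ i : Fin (m+1),
        TForm.teamSat T (TForm.bigAndF fun j => deH (φ i j)) ↔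
          ∀ j, ∀ t ∈ T, (deH (φ i j)).sat t := by
      intro i
      rw [TForm.bigAndF, teamSat_foldr_and]
      simp only [List.mem_ofFn, Set.mem_range]
      rw [Fin.forall_fin_succ]
      constructor
      · rintro ⟨h0, hs⟩
        exact ⟨(hmain i 0).2.mp h0, fun j => (hmain i j.succ).2.mp (hs _ ⟨j, rfl⟩)⟩
      · rintro ⟨h0, hs⟩
        exact ⟨(hmain i 0).2.mpr h0, by rintro ψ ⟨j, rfl⟩; exact (hmain i j.succ).2.mpr (hs j)⟩
    rw [hand 0]
    constructor
    · rintro (h | ⟨ψ, ⟨i, rfl⟩, h⟩)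
      · exact ⟨0, h⟩
      · exact ⟨i.succ, (hand i.succ).mp h⟩
    · rintro ⟨i, h⟩
      rcases Fin.eq_zero_or_eq_succ i with rfl | ⟨i', rfl⟩
      · exact Or.inl h
      · exact Or.inr ⟨_, ⟨i', rfl⟩, (hand i'.succ).mpr h⟩
  rw [LHS, RHS]
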